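/- arXiv:1909.10641 — 4 statements merged into one kernel-verified Lean document; each statement's English description precedes it below -/
import Mathlib

section
/- Let σ_c > 0 and δ_u > 0, and let g(·; d) be the damaged cohesive potential with damage value d ∈ [0, δ_u]. Then g(·; d) is nondecreasing on [0, ∞); furthermore, if d < δ_u then g(·; d) is strictly increasing on the interval [0, δ_u]. -/
/-- The damaged cohesive potential `g(·; d)` is nondecreasing on `[0,∞)`, and
strictly increasing on `[0, δ_u]` when `d < δ_u`. -/
theorem stmt_11 (σc δu d : ℝ) (hσ : 0 < σc) (hδ : 0 < δu)
    (hd : d ∈ Set.Icc (0 : ℝ) δu)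
    (q : ℝ) (hq : q = -(σc / (2 * δu)))
    (l : ℝ → ℝ) (hl : ∀ d', l d' = -2 * (δu - d') * q)
    (g : ℝ → ℝ)
    (hg : ∀ δ, g δ = if δ ≤ d then l d * δ
      else if δ ≤ δu then l d * δ + q * (δ - d) ^ 2
      else l d * δu + q * (δu - d) ^ 2) :
    MonotoneOn g (Set.Ici 0) ∧
    (d < δu → StrictMonoOn g (Set.Icc 0 δu)) := by
  obtain ⟨hd0, hdu⟩ := hd
  have hq' : q < 0 := by
    rw [hq]; have : 0 < σc / (2 * δu) := by positivity
    linarith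
  have hn : (0:ℝ) ≤ -q := by linarith
  have hn' : (0:ℝ) < -q := by linarith
  constructor
  · intro x hx y hy hxy
    simp only [Set.mem_Ici] at hx hy
    rw [hg x, hg y, hl d]
    split_ifs with h1 h2 h3 h4 h5 h6 h7 h8
    · nlinarith [mul_nonneg (mul_nonneg hn (by linarith : (0:ℝ) ≤ δu - d))
        (by linarith : (0:ℝ) ≤ y - x)]
    · nlinarith [mul_nonneg (mul_nonneg hn (by linarith : (0:ℝ) ≤ δu - d))
        (by linarith : (0:ℝ) ≤ y - x),
        mul_nonneg (mul_nonneg hn (by linarith : (0:ℝ) ≤ δu - d))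
        (by linarith : (0:ℝ) ≤ d - x),
        mul_nonneg (mul_nonneg hn (by linarith : (0:ℝ) ≤ δu - y))
        (by linarith : (0:ℝ) ≤ y - d)]
    · nlinarith [mul_nonneg (mul_nonneg hn (by linarith : (0:ℝ) ≤ δu - d))
        (by linarith : (0:ℝ) ≤ δu - x),
        mul_nonneg (mul_nonneg hn (by linarith : (0:ℝ) ≤ δu - d))
        (by linarith : (0:ℝ) ≤ d - x)]
    · linarith
    · nlinarith [mul_nonneg (mul_nonneg hn (by linarith : (0:ℝ) ≤ y - x))
        (by linarith : (0:ℝ) ≤ δu - y),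
        mul_nonneg (mul_nonneg hn (by linarith : (0:ℝ) ≤ y - x))
        (by linarith : (0:ℝ) ≤ δu - x)]
    · nlinarith [mul_nonneg (mul_nonneg hn (by linarith : (0:ℝ) ≤ δu - x))
        (by linarith : (0:ℝ) ≤ δu - x)]
    · linarith
    · linarith
    · exact le_refl _
  · intro hdlt x hx y hy hxy
    obtain ⟨hx0, hxu⟩ := hx
    obtain ⟨hy0, hyu⟩ := hy
    rw [hg x, hg y, hl d]
    split_ifs with h1 h2 h3
    · nlinarith [mul_pos (mul_pos hn' (by linarith : (0:ℝ) < δu - d))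
        (by linarith : (0:ℝ) < y - x)]
    · nlinarith [mul_pos (mul_pos hn' (by linarith : (0:ℝ) < δu - d))
        (by linarith : (0:ℝ) < y - x),
        mul_nonneg (mul_nonneg hn (by linarith : (0:ℝ) ≤ δu - d))
        (by linarith : (0:ℝ) ≤ d - x),
        mul_nonneg (mul_nonneg hn (by linarith : (0:ℝ) ≤ δu - y))
        (by linarith : (0:ℝ) ≤ y - d)]
    · linarith
    · nlinarith [mul_pos (mul_pos hn' (by linarith : (0:ℝ) < y - x))
        (by linarith : (0:ℝ) < δu - x),
        mul_nonneg (mul_nonneg hn (by linarith : (0:ℝ) ≤ y - x))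
        (by linarith : (0:ℝ) ≤ δu - y)]
end

section
/- Let σ_c > 0 and δ_u > 0, and let g(·; d) be the damaged cohesive potential with damage value d ∈ [0, δ_u]. Then on each of the open intervals (0, d), (d, δ_u), and (δ_u, ∞), the function δ ↦ g(δ; d) is twice differentiable with second derivative equal to either 0 or 2q = −σ_c/δ_u; in particular, |∂²g/∂δ²(δ; d)| ≤ σ_c/δ_u at every such δ, a bound independent of the damage value d. -/
/-!
Each of the three pieces of `g` is a polynomial of degree at most two (linear, a downward
parabola with leading coefficient `q`, and a constant), and on an open interval the first two
derivatives of `g` are those of the piece it agrees with there. The second derivative is therefore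
`0` or `2q`, and `|2q| = σ_c/δ_u`.
-/

open Filter Set Topology

theorem hasDerivAt_deriv_of_eqOn {𝕜 F : Type*} [NontriviallyNormedField 𝕜] [NormedAddCommGroup F]
    [NormedSpace 𝕜 F] {f g f' : 𝕜 → F} {f'' : F} {s : Set 𝕜} {x : 𝕜}
    (hs : IsOpen s) (hgf : EqOn g f s) (hf : ∀ y ∈ s, HasDerivAt f (f' y) y) (hx : x ∈ s)
    (hf' : HasDerivAt f' f'' x) : HasDerivAt (deriv g) f'' x := by
  refine hf'.congr_of_eventuallyEq ?_
  filter_upwards [hs.mem_nhds hx] with y hy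
  have hgf_near : g =ᶠ[𝓝 y] f := eventually_of_mem (hs.mem_nhds hy) hgf
  rw [hgf_near.deriv_eq, (hf y hy).deriv]

theorem hasDerivAt_deriv_of_eqOn_quadratic {g : ℝ → ℝ} {a b c e x : ℝ} {s : Set ℝ}
    (hs : IsOpen s) (hg : EqOn g (fun y => a + b * y + c * (y - e) ^ 2) s) (hx : x ∈ s) :
    HasDerivAt (deriv g) (2 * c) x := by
  have hquad : ∀ y, HasDerivAt (fun y => a + b * y + c * (y - e) ^ 2)
      (b + 2 * c * (y - e)) y := fun y => by
    refine ((((hasDerivAt_id y).const_mul b).const_add a).add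
      ((((hasDerivAt_id y).sub_const e).pow 2).const_mul c)).congr_deriv ?_
    simp only [id, mul_one]
    ring
  have hlin : HasDerivAt (fun y => b + 2 * c * (y - e)) (2 * c) x := by
    simpa using (((hasDerivAt_id x).sub_const e).const_mul (2 * c)).const_add b
  exact hasDerivAt_deriv_of_eqOn hs hg (fun y _ => hquad y) hx hlin

theorem stmt_12_general (σc δu d : ℝ) (hσ : 0 < σc) (hδ : 0 < δu)
    (hd : d ∈ Set.Icc (0 : ℝ) δu)
    (q : ℝ) (hq : q = -(σc / (2 * δu)))
    (l : ℝ → ℝ)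
    (g : ℝ → ℝ)
    (hg : ∀ δ, g δ = if δ ≤ d then l d * δ
      else if δ ≤ δu then l d * δ + q * (δ - d) ^ 2
      else l d * δu + q * (δu - d) ^ 2) :
    (∀ δ ∈ Set.Ioo 0 d, HasDerivAt (deriv g) 0 δ) ∧
    (∀ δ ∈ Set.Ioo d δu, HasDerivAt (deriv g) (2 * q) δ) ∧
    (∀ δ ∈ Set.Ioi δu, HasDerivAt (deriv g) 0 δ) ∧
    (∀ δ ∈ Set.Ioo 0 d ∪ Set.Ioo d δu ∪ Set.Ioi δu,
      |deriv (deriv g) δ| ≤ σc / δu) := by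
  have linear : ∀ δ ∈ Set.Ioo 0 d, HasDerivAt (deriv g) 0 δ := fun δ hδ' => by
    simpa using hasDerivAt_deriv_of_eqOn_quadratic (a := 0) (b := l d) (c := 0) (e := 0)
      isOpen_Iio (fun y (hy : y < d) => by simp [hg, hy.le]) hδ'.2
  have parabolic : ∀ δ ∈ Set.Ioo d δu, HasDerivAt (deriv g) (2 * q) δ := fun δ hδ' =>
    hasDerivAt_deriv_of_eqOn_quadratic (a := 0) (b := l d) (e := d) isOpen_Ioo
      (fun y hy => by simp [hg, not_le.mpr hy.1, hy.2.le]) hδ'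
  have constant : ∀ δ ∈ Set.Ioi δu, HasDerivAt (deriv g) 0 δ := fun δ hδ' => by
    simpa using hasDerivAt_deriv_of_eqOn_quadratic (a := l d * δu + q * (δu - d) ^ 2) (b := 0) (c := 0)
      (e := 0) isOpen_Ioi
      (fun y (hy : δu < y) => by simp [hg, not_le.mpr hy, not_le.mpr (hd.2.trans_lt hy)]) hδ'
  have hbound_pos : 0 ≤ σc / δu := (div_pos hσ hδ).le
  have habs_two_q : |2 * q| = σc / δu := by
    rw [hq, show 2 * -(σc / (2 * δu)) = -(σc / δu) by field_simp, abs_neg,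
      abs_of_nonneg hbound_pos]
  refine ⟨linear, parabolic, constant, ?_⟩
  rintro δ ((h | h) | h)
  · simpa [(linear δ h).deriv] using hbound_pos
  · rw [(parabolic δ h).deriv, habs_two_q]
  · simpa [(constant δ h).deriv] using hbound_pos

/-- On each open interval between breakpoints, the damaged cohesive potential is
twice differentiable with second derivative `0` or `2q = -σ_c/δ_u`; hence the
second derivative is uniformly bounded by `σ_c/δ_u`, independently of `d`. -/
theorem stmt_12 (σc δu d : ℝ) (hσ : 0 < σc) (hδ : 0 < δu)
    (hd : d ∈ Set.Icc (0 : ℝ) δu)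
    (q : ℝ) (hq : q = -(σc / (2 * δu)))
    (l : ℝ → ℝ) (hl : ∀ d', l d' = -2 * (δu - d') * q)
    (g : ℝ → ℝ)
    (hg : ∀ δ, g δ = if δ ≤ d then l d * δ
      else if δ ≤ δu then l d * δ + q * (δ - d) ^ 2
      else l d * δu + q * (δu - d) ^ 2) :
    (∀ δ ∈ Set.Ioo 0 d, HasDerivAt (deriv g) 0 δ) ∧
    (∀ δ ∈ Set.Ioo d δu, HasDerivAt (deriv g) (2 * q) δ) ∧
    (∀ δ ∈ Set.Ioi δu, HasDerivAt (deriv g) 0 δ) ∧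
    (∀ δ ∈ Set.Ioo 0 d ∪ Set.Ioo d δu ∪ Set.Ioi δu,
      |deriv (deriv g) δ| ≤ σc / δu) :=
  stmt_12_general σc δu d hσ hδ hd q hq l g hg
end

section
/- Let σ_c > 0 and δ_u > 0, let g be the undamaged cohesive potential, and let F : ℝ → ℝ be differentiable at 0 with F′(0) > −σ_c. Then δ = 0 is a strict local minimizer of the function δ ↦ F(δ) + g(δ) on [0, ∞); that is, there exists ε > 0 such that F(δ) + g(δ) > F(0) + g(0) for all δ ∈ (0, ε). In particular, no opening of the interface occurs until the magnitude of the driving energy-release slope −F′(0) reaches the critical traction σ_c. -/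
/-! Near `0` the potential `g` is the quadratic `σ_c δ + q δ²`, so `F + g` has derivative
`F′(0) + σ_c > 0` at `0`; a function with positive derivative lies strictly above its value
at the base point just to the right of it. -/

open Filter Topology Set

theorem HasDerivWithinAt.eventually_lt_of_pos {f : ℝ → ℝ} {f' a : ℝ}
    (hf : HasDerivWithinAt f f' (Ioi a) a) (hf' : 0 < f') : ∀ᶠ x in 𝓝[>] a, f a < f x := by
  have hslope : ∀ᶠ x in 𝓝[>] a, 0 < slope f a x :=
    ((hasDerivWithinAt_iff_tendsto_slope' (lt_irrefl a)).mp hf).eventually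
      (eventually_gt_nhds hf')
  filter_upwards [hslope, self_mem_nhdsWithin] with x hx hax
  exact (slope_pos_iff_of_le hax.le).mp hx

theorem HasDerivWithinAt.exists_Ioo_lt_of_pos {f : ℝ → ℝ} {f' a : ℝ}
    (hf : HasDerivWithinAt f f' (Ioi a) a) (hf' : 0 < f') :
    ∃ ε > 0, ∀ x ∈ Ioo a (a + ε), f a < f x := by
  obtain ⟨u, hau, hu⟩ := mem_nhdsGT_iff_exists_Ioo_subset.mp (hf.eventually_lt_of_pos hf')
  exact ⟨u - a, sub_pos.mpr hau, fun x hx => hu (by simpa using hx)⟩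

theorem hasDerivAt_zero_of_eq_quadratic {g : ℝ → ℝ} {l q r : ℝ} (hr : 0 < r)
    (hg : ∀ x ≤ r, g x = l * x + q * x ^ 2) : HasDerivAt g l 0 := by
  have hquad : HasDerivAt (fun x : ℝ => l * x + q * x ^ 2) l 0 := by
    simpa using
      ((hasDerivAt_id (0 : ℝ)).const_mul l).fun_add ((hasDerivAt_pow 2 (0 : ℝ)).const_mul q)
  refine hquad.congr_of_eventuallyEq ?_
  filter_upwards [Iio_mem_nhds hr] with x hx
  exact hg x hx.le

theorem stmt_14_general (σc δu : ℝ) (hδ : 0 < δu)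
    (g : ℝ → ℝ)
    (hg : ∀ δ, g δ = if δ ≤ δu then σc * δ + (-(σc / (2 * δu))) * δ ^ 2
      else σc * δu + (-(σc / (2 * δu))) * δu ^ 2)
    (F : ℝ → ℝ) (hF : DifferentiableAt ℝ F 0) (hF' : -σc < deriv F 0) :
    ∃ ε > 0, ∀ δ ∈ Set.Ioo 0 ε, F 0 + g 0 < F δ + g δ := by
  have hg' : HasDerivAt g σc 0 :=
    hasDerivAt_zero_of_eq_quadratic hδ fun δ hδu => by rw [hg δ, if_pos hδu]
  have hsum : HasDerivAt (fun δ => F δ + g δ) (deriv F 0 + σc) 0 := hF.hasDerivAt.add hg'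
  simpa using hsum.hasDerivWithinAt.exists_Ioo_lt_of_pos (by linarith)

/-- Initially rigid behavior: if the smooth part `F` of the energy satisfies
`F′(0) > -σ_c`, then `δ = 0` is a strict local minimizer of `F + g` on `[0,∞)`,
so no opening occurs until the driving slope reaches the critical traction. -/
theorem stmt_14 (σc δu : ℝ) (hσ : 0 < σc) (hδ : 0 < δu)
    (g : ℝ → ℝ)
    (hg : ∀ δ, g δ = if δ ≤ δu then σc * δ + (-(σc / (2 * δu))) * δ ^ 2
      else σc * δu + (-(σc / (2 * δu))) * δu ^ 2)
    (F : ℝ → ℝ) (hF : DifferentiableAt ℝ F 0) (hF' : -σc < deriv F 0) :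
    ∃ ε > 0, ∀ δ ∈ Set.Ioo 0 ε, F 0 + g 0 < F δ + g δ :=
  stmt_14_general σc δu hδ g hg F hF hF'
end

section
/- Let n ≥ 1, let H be a symmetric n×n real matrix, let N be a symmetric positive definite n×n real matrix, let g ∈ ℝ^n, let R > 0, and let λ ≥ 0 and p ∈ ℝ^n satisfy: (i) (H + λN)·p = −g; (ii) H + λN is positive semidefinite; (iii) p^T·N·p ≤ R²; and (iv) λ·(p^T·N·p − R²) = 0. Then p is a global minimizer of the quadratic model m(z) = g^T·z + (1/2)·z^T·H·z over the trust region {z ∈ ℝ^n : z^T·N·z ≤ R²}. -/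
open Matrix

/-!
With `A := H + λN`, the model `m_H` differs from the convex model `m_A(z) = gᵀz + ½ zᵀAz` by
`-(λ/2) zᵀNz`. Since `Ap = -g`, completing the square gives `m_A(z) = m_A(p) + ½ (z-p)ᵀA(z-p)`,
so `p` minimizes `m_A` globally. On the trust region `λ zᵀNz ≤ λR² = λ pᵀNp` by complementarity,
hence `m_H(p) = m_A(p) - (λ/2) pᵀNp ≤ m_A(z) - (λ/2) zᵀNz = m_H(z)`.
-/

section QuadraticModel

variable {ι 𝕜 : Type*} [Fintype ι] [Field 𝕜]

def quadraticModel (g : ι → 𝕜) (H : Matrix ι ι 𝕜) (z : ι → 𝕜) : 𝕜 :=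
  g ⬝ᵥ z + (1 / 2) * (z ⬝ᵥ (H *ᵥ z))

theorem quadraticModel_add_smul (g : ι → 𝕜) (H N : Matrix ι ι 𝕜) (lam : 𝕜) (z : ι → 𝕜) :
    quadraticModel g (H + lam • N) z
      = quadraticModel g H z + lam / 2 * (z ⬝ᵥ (N *ᵥ z)) := by
  simp only [quadraticModel, add_mulVec, smul_mulVec, dotProduct_add, dotProduct_smul, smul_eq_mul]
  ring

theorem Matrix.IsSymm.dotProduct_mulVec_comm {A : Matrix ι ι 𝕜} (hA : A.IsSymm) (v w : ι → 𝕜) :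
    v ⬝ᵥ (A *ᵥ w) = w ⬝ᵥ (A *ᵥ v) := by
  rw [dotProduct_mulVec, ← mulVec_transpose, hA, dotProduct_comm]

theorem quadraticModel_eq_add_of_mulVec_eq_neg [CharZero 𝕜] {A : Matrix ι ι 𝕜} (hA : A.IsSymm)
    {g p : ι → 𝕜} (hp : A *ᵥ p = -g) (z : ι → 𝕜) :
    quadraticModel g A z = quadraticModel g A p + (1 / 2) * ((z - p) ⬝ᵥ (A *ᵥ (z - p))) := by
  have hg : g = -(A *ᵥ p) := by rw [hp, neg_neg]
  simp only [quadraticModel, hg, mulVec_sub, sub_dotProduct, dotProduct_sub, neg_dotProduct,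
    dotProduct_comm (A *ᵥ p)]
  linear_combination (1 / 2 : 𝕜) * hA.dotProduct_mulVec_comm p z

end QuadraticModel

theorem quadraticModel_le_of_posSemidef {ι : Type*} [Fintype ι] {A : Matrix ι ι ℝ}
    (hA : A.PosSemidef) {g p : ι → ℝ} (hp : A *ᵥ p = -g) (z : ι → ℝ) :
    quadraticModel g A p ≤ quadraticModel g A z := by
  have hsymm : A.IsSymm := isHermitian_iff_isSymm.mp hA.isHermitian
  have hsq : 0 ≤ (z - p) ⬝ᵥ (A *ᵥ (z - p)) := by
    simpa only [star_trivial] using hA.dotProduct_mulVec_nonneg (z - p)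
  rw [quadraticModel_eq_add_of_mulVec_eq_neg hsymm hp z]
  linarith

theorem stmt_16_general (n : ℕ)
    (H N : Matrix (Fin n) (Fin n) ℝ)
    (g p : Fin n → ℝ) (R lam : ℝ) (hlam : 0 ≤ lam)
    (h1 : (H + lam • N) *ᵥ p = -g)
    (h2 : (H + lam • N).PosSemidef)
    (h4 : lam * (p ⬝ᵥ (N *ᵥ p) - R ^ 2) = 0) :
    ∀ z : Fin n → ℝ, z ⬝ᵥ (N *ᵥ z) ≤ R ^ 2 →
      g ⬝ᵥ p + (1 / 2) * (p ⬝ᵥ (H *ᵥ p)) ≤ g ⬝ᵥ z + (1 / 2) * (z ⬝ᵥ (H *ᵥ z)) := by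
  intro z hz
  change quadraticModel g H p ≤ quadraticModel g H z
  have hmin := quadraticModel_le_of_posSemidef h2 h1 z
  rw [quadraticModel_add_smul, quadraticModel_add_smul] at hmin
  have hregion : lam * (z ⬝ᵥ (N *ᵥ z)) ≤ lam * (p ⬝ᵥ (N *ᵥ p)) := by
    linarith [mul_le_mul_of_nonneg_left hz hlam]
  linarith

/-- Global optimality characterization of the trust-region step: if
`(H + λN)p = -g` with `H + λN ⪰ 0`, `pᵀNp ≤ R²`, and complementarity
`λ(pᵀNp - R²) = 0`, then `p` globally minimizes the quadratic model
`m(z) = gᵀz + (1/2)zᵀHz` over the ellipsoidal trust region `{z : zᵀNz ≤ R²}`. -/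
theorem stmt_16 (n : ℕ) (hn : 1 ≤ n)
    (H N : Matrix (Fin n) (Fin n) ℝ) (hH : H.IsSymm) (hN : N.PosDef)
    (g p : Fin n → ℝ) (R lam : ℝ) (hR : 0 < R) (hlam : 0 ≤ lam)
    (h1 : (H + lam • N) *ᵥ p = -g)
    (h2 : (H + lam • N).PosSemidef)
    (h3 : p ⬝ᵥ (N *ᵥ p) ≤ R ^ 2)
    (h4 : lam * (p ⬝ᵥ (N *ᵥ p) - R ^ 2) = 0) :
    ∀ z : Fin n → ℝ, z ⬝ᵥ (N *ᵥ z) ≤ R ^ 2 →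
      g ⬝ᵥ p + (1 / 2) * (p ⬝ᵥ (H *ᵥ p)) ≤ g ⬝ᵥ z + (1 / 2) * (z ⬝ᵥ (H *ᵥ z)) :=
  stmt_16_general n H N g p R lam hlam h1 h2 h4
end
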